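/- In the two-locus Moran model with generator G, for every N ≥ 1, every z ∈ ℕ^{K×L} with Σ_{ij} z_{ij} = N, every u ∈ [K] and every v ∈ [L], the generator applied to the marginal frequency functions satisfies exactly: G(z ↦ z_{u·}/N)(z) = (θ_A/2) Σ_{k=1}^K (P^A_{ku} − δ_{ku}) z_{k·}/N, and G(z ↦ z_{·v}/N)(z) = (θ_B/2) Σ_{l=1}^L (P^B_{lv} − δ_{lv}) z_{·l}/N; in particular neither reproduction, recombination, nor mutation at the other locus contributes to the drift of the marginal allele frequencies. -/

import Mathlib

/-!
A jump `z ↦ z - e_{ij} + e_{kl}` has positive rate only if `z_{ij} ≠ 0`, and then it changes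
`z_{u·}` by `δ_{ku} - δ_{iu}`. Hence the generator applied to `z ↦ z_{u·}/N` is
`∑ λ_{ij,kl}(z) (w_k - w_i)` with `w = δ_{·u}/N`. Split the rate into its four mechanisms.
Reproduction and recombination give sums `∑ z_{ij} a_{kl} (w_k - w_i)` whose kernel has row sums
`∑_l a_{kl}` proportional to `z_{k·}`; these vanish by antisymmetry under `i ↔ k`. Mutation at
locus B leaves the A-allele unchanged, and mutation at locus A gives the stated drift. The
identity for `z_{·v}` is the one for `z_{u·}` in the model with the two loci swapped.
-/

open scoped BigOperators

/-- Transition rate of the two-locus Moran model: the rate at which a haplotype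
`(i,j)` dies and is replaced by a haplotype `(k,l)` when the configuration is `z`. -/
noncomputable def moranRate (N K L : ℕ) (θA θB ρ : ℝ)
    (PA : Fin K → Fin K → ℝ) (PB : Fin L → Fin L → ℝ)
    (z : Fin K → Fin L → ℕ) (i : Fin K) (j : Fin L) (k : Fin K) (l : Fin L) : ℝ :=
  ((z i j : ℝ) / N) *
    (((N : ℝ) ^ 2 / 2) * ((z k l : ℝ) / N)
      + (N : ℝ) * (θA / 2 * PA i k * (if j = l then 1 else 0)
          + θB / 2 * PB j l * (if i = k then 1 else 0)
          + ρ / 2 * ((∑ l', (z k l' : ℝ)) / N) * ((∑ k', (z k' l : ℝ)) / N)))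

/-- The configuration `z − e_{ij} + e_{kl}`. -/
def moranUpdate {K L : ℕ} (z : Fin K → Fin L → ℕ)
    (i : Fin K) (j : Fin L) (k : Fin K) (l : Fin L) : Fin K → Fin L → ℕ :=
  fun i' j' => z i' j' - (if i' = i ∧ j' = j then 1 else 0)
    + (if i' = k ∧ j' = l then 1 else 0)

/-- Generator of the two-locus Moran model acting on `f : ℕ^{K×L} → ℝ`. -/
noncomputable def moranGen (N K L : ℕ) (θA θB ρ : ℝ)
    (PA : Fin K → Fin K → ℝ) (PB : Fin L → Fin L → ℝ)
    (f : (Fin K → Fin L → ℕ) → ℝ) (z : Fin K → Fin L → ℕ) : ℝ :=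
  ∑ i, ∑ j, ∑ k, ∑ l,
    moranRate N K L θA θB ρ PA PB z i j k l * (f (moranUpdate z i j k l) - f z)

open Finset

lemma sum_mul_sum_mul_sub_eq_zero {ι : Type*} [Fintype ι] (g w : ι → ℝ) :
    ∑ i, g i * ∑ k, g k * (w k - w i) = 0 := by
  have h : ∀ i, g i * ∑ k, g k * (w k - w i) = g i * ∑ k, g k * w k - g i * w i * ∑ k, g k := by
    intro i
    simp only [mul_sub, sum_sub_distrib, ← sum_mul]
    ring
  simp only [h, sum_sub_distrib, ← sum_mul]
  ring

lemma sum_mul_mul_sub_eq_zero_of_rowSum_eq_mul {ι κ : Type*} [Fintype ι] [Fintype κ]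
    (b a : ι → κ → ℝ) (c : ℝ) (w : ι → ℝ) (ha : ∀ k, ∑ l, a k l = c * ∑ l, b k l) :
    ∑ i, ∑ j, ∑ k, ∑ l, b i j * a k l * (w k - w i) = 0 := by
  have hrow : ∀ i, ∑ k, (∑ l, a k l) * (w k - w i) = c * ∑ k, (∑ l, b k l) * (w k - w i) := by
    simp only [ha, mul_assoc, ← mul_sum, implies_true]
  calc ∑ i, ∑ j, ∑ k, ∑ l, b i j * a k l * (w k - w i)
      = ∑ i, ∑ j, b i j * ∑ k, (∑ l, a k l) * (w k - w i) := by
        simp only [mul_sum, sum_mul, mul_assoc]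
    _ = ∑ i, (∑ j, b i j) * ∑ k, (∑ l, a k l) * (w k - w i) := by
        simp only [sum_mul]
    _ = c * ∑ i, (∑ j, b i j) * ∑ k, (∑ l, b k l) * (w k - w i) := by
        rw [mul_sum]
        exact sum_congr rfl fun i _ => by rw [hrow]; ring
    _ = 0 := by rw [sum_mul_sum_mul_sub_eq_zero, mul_zero]

lemma sum_mul_mul_ite_mul_sub_of_rowSum_eq_one {ι κ : Type*} [Fintype ι] [Fintype κ] [DecidableEq κ]
    (b : ι → κ → ℝ) (P : ι → ι → ℝ) (hP : ∀ i, ∑ k, P i k = 1) (w : ι → ℝ) :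
    ∑ i, ∑ j, ∑ k, ∑ l, b i j * (P i k * if j = l then 1 else 0) * (w k - w i)
      = ∑ i, (∑ j, b i j) * (∑ k, P i k * w k - w i) := by
  have hdrift : ∀ i, ∑ k, P i k * (w k - w i) = ∑ k, P i k * w k - w i := by
    intro i
    simp only [mul_sub, sum_sub_distrib, ← sum_mul, hP, one_mul]
  simp only [mul_ite, mul_one, mul_zero, ite_mul, zero_mul, sum_ite_eq, mem_univ, if_true,
    ← hdrift, mul_assoc, ← mul_sum, sum_mul]

section
variable {N K L : ℕ} {θA θB ρ : ℝ} {PA : Fin K → Fin K → ℝ} {PB : Fin L → Fin L → ℝ}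
  {z : Fin K → Fin L → ℕ}

lemma moranRate_eq (hN : (N : ℝ) ≠ 0) (i : Fin K) (j : Fin L) (k : Fin K) (l : Fin L) :
    moranRate N K L θA θB ρ PA PB z i j k l
      = 1 / 2 * ((z i j : ℝ) * z k l)
        + θA / 2 * (z i j * (PA i k * if j = l then 1 else 0))
        + θB / 2 * (z i j * (PB j l * if i = k then 1 else 0))
        + ρ / (2 * N ^ 2) * (z i j * ((∑ l', (z k l' : ℝ)) * ∑ k', (z k' l : ℝ))) := by
  unfold moranRate
  field_simp
  ring

lemma sum_moranRate_mul_sub (hN : (N : ℝ) ≠ 0) (hPA : ∀ i, ∑ k, PA i k = 1)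
    (hz : ∑ i, ∑ j, z i j = N) (w : Fin K → ℝ) :
    ∑ i, ∑ j, ∑ k, ∑ l, moranRate N K L θA θB ρ PA PB z i j k l * (w k - w i)
      = θA / 2 * ∑ i, (∑ j, (z i j : ℝ)) * (∑ k, PA i k * w k - w i) := by
  have hzR : ∑ i, ∑ j, (z i j : ℝ) = N := by exact_mod_cast hz
  have hcol : ∀ k, ∑ l, (∑ l', (z k l' : ℝ)) * ∑ k', (z k' l : ℝ) = N * ∑ l, (z k l : ℝ) := by
    intro k
    rw [← mul_sum, sum_comm, hzR, mul_comm]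
  have hreproduction := sum_mul_mul_sub_eq_zero_of_rowSum_eq_mul (fun i j => (z i j : ℝ))
    (fun i j => (z i j : ℝ)) 1 w (fun k => (one_mul _).symm)
  have hrecombination := sum_mul_mul_sub_eq_zero_of_rowSum_eq_mul (fun i j => (z i j : ℝ)) _ N w hcol
  have hmutationA := sum_mul_mul_ite_mul_sub_of_rowSum_eq_one (fun i j => (z i j : ℝ)) PA hPA w
  have hmutationB : ∀ i j k l,
      (z i j : ℝ) * (PB j l * if i = k then 1 else 0) * (w k - w i) = 0 := by
    intro i j k l
    split_ifs with h <;> simp [h]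
  have hsplit : ∀ i j k l, moranRate N K L θA θB ρ PA PB z i j k l * (w k - w i)
      = 1 / 2 * ((z i j : ℝ) * z k l * (w k - w i))
        + θA / 2 * ((z i j : ℝ) * (PA i k * if j = l then 1 else 0) * (w k - w i))
        + θB / 2 * ((z i j : ℝ) * (PB j l * if i = k then 1 else 0) * (w k - w i))
        + ρ / (2 * N ^ 2) *
            ((z i j : ℝ) * ((∑ l', (z k l' : ℝ)) * ∑ k', (z k' l : ℝ)) * (w k - w i)) := by
    intro i j k l
    rw [moranRate_eq hN]
    ring
  simp only [hsplit, sum_add_distrib, ← mul_sum, hreproduction, hmutationA, hmutationB,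
    hrecombination, sum_const_zero]
  ring

lemma moranUpdate_apply_cast {i : Fin K} {j : Fin L} (hij : z i j ≠ 0)
    (k : Fin K) (l : Fin L) (a : Fin K) (b : Fin L) :
    (moranUpdate z i j k l a b : ℝ)
      = z a b - (if a = i ∧ b = j then 1 else 0) + (if a = k ∧ b = l then 1 else 0) := by
  have hle : (if a = i ∧ b = j then 1 else 0) ≤ z a b := by
    split_ifs with h
    · obtain ⟨rfl, rfl⟩ := h
      exact Nat.one_le_iff_ne_zero.mpr hij
    · exact Nat.zero_le _
  rw [moranUpdate, Nat.cast_add, Nat.cast_sub hle]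
  push_cast
  rfl

lemma sum_moranUpdate_row {i : Fin K} {j : Fin L} (hij : z i j ≠ 0)
    (k : Fin K) (l : Fin L) (u : Fin K) :
    ∑ b, (moranUpdate z i j k l u b : ℝ)
      = ∑ b, (z u b : ℝ) + ((if k = u then 1 else 0) - (if i = u then 1 else 0)) := by
  simp only [moranUpdate_apply_cast hij, eq_comm (a := u), ite_and, sum_add_distrib,
    sum_sub_distrib, sum_ite_irrel, sum_ite_eq', mem_univ, if_true, sum_const_zero]
  ring

theorem moranGen_rowMarginal (hN : N ≠ 0) (hPA : ∀ i, ∑ k, PA i k = 1)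
    (hz : ∑ i, ∑ j, z i j = N) (u : Fin K) :
    moranGen N K L θA θB ρ PA PB (fun z' => (∑ l, (z' u l : ℝ)) / N) z
      = θA / 2 * ∑ k, (PA k u - if k = u then 1 else 0) * ((∑ l, (z k l : ℝ)) / N) := by
  set w : Fin K → ℝ := fun a => (if a = u then 1 else 0) / N
  have hincrement : ∀ i j k l,
      moranRate N K L θA θB ρ PA PB z i j k l *
          ((∑ b, (moranUpdate z i j k l u b : ℝ)) / N - (∑ b, (z u b : ℝ)) / N)
        = moranRate N K L θA θB ρ PA PB z i j k l * (w k - w i) := by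
    intro i j k l
    by_cases hij : z i j = 0
    · -- the rate vanishes, so the truncated subtraction in `moranUpdate` does not matter
      simp [moranRate, hij]
    · rw [sum_moranUpdate_row hij]
      ring
  calc moranGen N K L θA θB ρ PA PB (fun z' => (∑ l, (z' u l : ℝ)) / N) z
      = ∑ i, ∑ j, ∑ k, ∑ l, moranRate N K L θA θB ρ PA PB z i j k l * (w k - w i) := by
        simp only [moranGen, hincrement]
    _ = θA / 2 * ∑ i, (∑ j, (z i j : ℝ)) * (∑ k, PA i k * w k - w i) :=
        sum_moranRate_mul_sub (Nat.cast_ne_zero.mpr hN) hPA hz w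
    _ = θA / 2 * ∑ k, (PA k u - if k = u then 1 else 0) * ((∑ l, (z k l : ℝ)) / N) := by
        have hPAw : ∀ i, ∑ k, PA i k * w k = PA i u / N := by
          simp only [w, mul_div_assoc', ← sum_div, mul_ite, mul_one, mul_zero, sum_ite_eq',
            mem_univ, if_true, implies_true]
        simp only [hPAw, w]
        congr 1
        exact sum_congr rfl fun i _ => by ring

lemma moranRate_swap (i : Fin K) (j : Fin L) (k : Fin K) (l : Fin L) :
    moranRate N L K θB θA ρ PB PA (Function.swap z) j i l k
      = moranRate N K L θA θB ρ PA PB z i j k l := by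
  simp only [moranRate, Function.swap]
  ring

lemma moranUpdate_swap (i : Fin K) (j : Fin L) (k : Fin K) (l : Fin L) :
    moranUpdate (Function.swap z) j i l k = Function.swap (moranUpdate z i j k l) := by
  ext b a
  simp only [moranUpdate, Function.swap, and_comm]

lemma moranGen_swap (f : (Fin L → Fin K → ℕ) → ℝ) :
    moranGen N L K θB θA ρ PB PA f (Function.swap z)
      = moranGen N K L θA θB ρ PA PB (fun z' => f (Function.swap z')) z := by
  unfold moranGen
  rw [sum_comm]
  refine sum_congr rfl fun i _ => sum_congr rfl fun j _ => ?_
  rw [sum_comm]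
  simp only [moranRate_swap, moranUpdate_swap]

end

theorem moranGen_marginals_general (N K L : ℕ) (hN : 1 ≤ N)
    (θA θB ρ : ℝ)
    (PA : Fin K → Fin K → ℝ) (PB : Fin L → Fin L → ℝ)
    (hPA : (∀ i k, 0 ≤ PA i k) ∧ ∀ i, ∑ k, PA i k = 1)
    (hPB : (∀ j l, 0 ≤ PB j l) ∧ ∀ j, ∑ l, PB j l = 1)
    (z : Fin K → Fin L → ℕ) (hz : ∑ i, ∑ j, z i j = N)
    (u : Fin K) (v : Fin L) :
    moranGen N K L θA θB ρ PA PB (fun z' => (∑ l, (z' u l : ℝ)) / N) z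
        = θA / 2 * ∑ k, (PA k u - if k = u then 1 else 0) * ((∑ l, (z k l : ℝ)) / N)
      ∧ moranGen N K L θA θB ρ PA PB (fun z' => (∑ k, (z' k v : ℝ)) / N) z
        = θB / 2 * ∑ l, (PB l v - if l = v then 1 else 0) * ((∑ k, (z k l : ℝ)) / N) := by
  have hN0 : N ≠ 0 := Nat.one_le_iff_ne_zero.mp hN
  have hzswap : ∑ j, ∑ i, Function.swap z j i = N := by
    rw [sum_comm]
    exact hz
  refine ⟨moranGen_rowMarginal hN0 hPA.2 hz u, ?_⟩
  rw [← moranGen_swap (fun y => (∑ k, (y v k : ℝ)) / N)]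
  exact moranGen_rowMarginal hN0 hPB.2 hzswap v

/-- Exact action of the Moran generator on the marginal allele frequencies
`z ↦ z_{u·}/N` and `z ↦ z_{·v}/N`: only mutation at the corresponding locus
contributes to the drift. -/
theorem moranGen_marginals (N K L : ℕ) (hN : 1 ≤ N) (hK : 1 ≤ K) (hL : 1 ≤ L)
    (θA θB ρ : ℝ) (hθA : 0 ≤ θA) (hθB : 0 ≤ θB) (hρ : 0 ≤ ρ)
    (PA : Fin K → Fin K → ℝ) (PB : Fin L → Fin L → ℝ)
    (hPA : (∀ i k, 0 ≤ PA i k) ∧ ∀ i, ∑ k, PA i k = 1)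
    (hPB : (∀ j l, 0 ≤ PB j l) ∧ ∀ j, ∑ l, PB j l = 1)
    (z : Fin K → Fin L → ℕ) (hz : ∑ i, ∑ j, z i j = N)
    (u : Fin K) (v : Fin L) :
    moranGen N K L θA θB ρ PA PB (fun z' => (∑ l, (z' u l : ℝ)) / N) z
        = θA / 2 * ∑ k, (PA k u - if k = u then 1 else 0) * ((∑ l, (z k l : ℝ)) / N)
      ∧ moranGen N K L θA θB ρ PA PB (fun z' => (∑ k, (z' k v : ℝ)) / N) z
        = θB / 2 * ∑ l, (PB l v - if l = v then 1 else 0) * ((∑ k, (z k l : ℝ)) / N) :=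
  moranGen_marginals_general N K L hN θA θB ρ PA PB hPA hPB z hz u v
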